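/- For m>0 and ρ>0 let ν^{(m)}_ρ(n) = (1−φ)^{m/2} φ^n Γ(m/2+n)/(n! Γ(m/2)) with φ = ρ/(m/2+ρ). Then: (i) 1 − ν^{(m)}_ρ(0) = −(m/2)(log m)(1 + o(1)) as m→0, i.e. (1 − ν^{(m)}_ρ(0))/(−(m/2)log m) → 1; (ii) for every fixed n≥1, |log m| · ν^{(m)}_ρ(n)/(1 − ν^{(m)}_ρ(0)) → 1/n as m→0; i.e. the distribution of a site conditioned to be non-empty, multiplied by |log m|, converges pointwise to the (non-normalizable) limit 1/n. -/

import Mathlib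

/-!
With `φ = ρ/(m/2+ρ)` one has `1 - φ = m/(m+2ρ)`, so `ν(0) = exp ((m/2)(log m - log (m+2ρ)))`,
and the exponent is asymptotic to `(m/2) log m → 0`; hence `1 - ν(0) ~ -(m/2) log m`.
For `n ≥ 1`, `Γ(m/2) = Γ(m/2+1)/(m/2)` gives `ν(n) = (m/2) ν(0) φⁿ Γ(m/2+n)/(n! Γ(m/2+1))`,
whose last factor is continuous at `m = 0` with value `Γ(n)/n! = 1/n`; the `m/2` cancels
against `1 - ν(0) ~ -(m/2) log m`.
-/

open Filter Topology

/-- The single-site marginal `ν^{(m)}_ρ(n) = (1−φ)^{m/2} φ^n Γ(m/2+n)/(n! Γ(m/2))`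
with `φ = ρ/(m/2+ρ)` of the homogeneous stationary measure of the SIP at density `ρ`. -/
noncomputable def nuSIP (m ρ : ℝ) (n : ℕ) : ℝ :=
  (1 - ρ / (m / 2 + ρ)) ^ (m / 2) * (ρ / (m / 2 + ρ)) ^ n *
    Real.Gamma (m / 2 + n) / (n.factorial * Real.Gamma (m / 2))

open Asymptotics Real

theorem Real.isEquivalent_exp_sub_one : (fun x => exp x - 1) ~[𝓝 0] id := by
  simpa using! (hasDerivAt_exp 0).isLittleO

theorem Real.isLittleO_log_add_const_log_nhdsGT_zero {c : ℝ} (hc : c ≠ 0) :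
    (fun x => log (x + c)) =o[𝓝[>] 0] log := by
  have hlim : Tendsto (fun x => log (x + c)) (𝓝[>] 0) (𝓝 (log (0 + c))) :=
    ((continuousAt_log (by simpa using hc)).comp (by fun_prop)).tendsto.mono_left
      nhdsWithin_le_nhds
  exact hlim.isBigO_one ℝ |>.trans_isLittleO <| (isLittleO_one_left_iff ℝ).2 <|
    tendsto_abs_atBot_atTop.comp tendsto_log_nhdsGT_zero

theorem Real.tendsto_half_mul_log_nhdsGT_zero :
    Tendsto (fun x => x / 2 * log x) (𝓝[>] 0) (𝓝 0) := by
  have := (continuous_mul_log.tendsto 0).div_const 2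
  simpa [div_mul_eq_mul_div] using this.mono_left nhdsWithin_le_nhds

theorem Real.isEquivalent_half_mul_log_sub_log_add {c : ℝ} (hc : c ≠ 0) :
    (fun x => x / 2 * (log x - log (x + c))) ~[𝓝[>] 0] fun x => x / 2 * log x := by
  refine (IsEquivalent.refl.sub_isLittleO (w := fun x => x / 2 * log (x + c)) ?_).congr_left
    (.of_eq (by ext x; simp only [Pi.sub_apply]; ring))
  exact (isBigO_refl _ _).mul_isLittleO (isLittleO_log_add_const_log_nhdsGT_zero hc)

theorem nuSIP_zero_eq_exp {m ρ : ℝ} (hm : 0 < m) (hρ : 0 ≤ ρ) :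
    nuSIP m ρ 0 = exp (m / 2 * (log m - log (m + 2 * ρ))) := by
  have hφ : 1 - ρ / (m / 2 + ρ) = m / (m + 2 * ρ) := by
    field_simp
    ring
  rw [nuSIP, hφ, rpow_def_of_pos (by positivity), log_div hm.ne' (by positivity)]
  simp [(Gamma_pos_of_pos (half_pos hm)).ne', mul_comm]

theorem nuSIP_eq_half_mul {m : ℝ} (hm : 0 < m) (ρ : ℝ) (n : ℕ) :
    nuSIP m ρ n = m / 2 * nuSIP m ρ 0 *
      ((ρ / (m / 2 + ρ)) ^ n * Gamma (m / 2 + n) / (n.factorial * Gamma (m / 2 + 1))) := by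
  simp only [nuSIP, Gamma_add_one (half_pos hm).ne', pow_zero, Nat.cast_zero, add_zero,
    Nat.factorial_zero, Nat.cast_one]
  field_simp

theorem tendsto_pow_mul_Gamma_div_factorial_mul_Gamma {ρ : ℝ} (hρ : ρ ≠ 0) {n : ℕ}
    (hn : 1 ≤ n) :
    Tendsto (fun m => (ρ / (m / 2 + ρ)) ^ n * Gamma (m / 2 + n) /
      (n.factorial * Gamma (m / 2 + 1))) (𝓝 0) (𝓝 (1 / n)) := by
  obtain ⟨j, rfl⟩ := Nat.exists_eq_add_of_le' hn
  have hΓ {c : ℝ} (hc : 0 < c) : ContinuousAt (fun m : ℝ => Gamma (m / 2 + c)) 0 := by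
    refine ContinuousAt.comp (g := Gamma) ?_ (by fun_prop)
    exact (differentiableAt_Gamma fun k => by
      simp only [zero_div, zero_add]; linarith [(Nat.cast_nonneg k : (0 : ℝ) ≤ k)]).continuousAt
  have hcont : ContinuousAt (fun m => (ρ / (m / 2 + ρ)) ^ (j + 1) *
      Gamma (m / 2 + (j + 1 : ℕ)) / ((j + 1).factorial * Gamma (m / 2 + 1))) 0 := by
    refine ((continuousAt_const.div (by fun_prop) (by simpa using hρ)).pow _ |>.mul
      (hΓ (by positivity))).div (continuousAt_const.mul (hΓ one_pos)) ?_
    simp [Nat.factorial_ne_zero]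
  convert hcont.tendsto using 2
  push_cast
  simp only [zero_div, zero_add, div_self hρ, one_pow, Gamma_one, one_mul, mul_one]
  rw [Gamma_nat_eq_factorial, Nat.factorial_succ]
  push_cast
  field_simp

theorem isEquivalent_one_sub_nuSIP_zero {ρ : ℝ} (hρ : 0 < ρ) :
    (fun m => 1 - nuSIP m ρ 0) ~[𝓝[>] 0] fun m => -(m / 2) * log m := by
  have hg := isEquivalent_half_mul_log_sub_log_add (c := 2 * ρ) (by positivity)
  have hexp : (fun m => exp (m / 2 * (log m - log (m + 2 * ρ))) - 1) ~[𝓝[>] 0]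
      fun m => m / 2 * (log m - log (m + 2 * ρ)) :=
    isEquivalent_exp_sub_one.comp_tendsto (hg.tendsto_nhds_iff.2 tendsto_half_mul_log_nhdsGT_zero)
  refine ((hexp.trans hg).neg.congr_left ?_).congr_right (.of_eq (by ext m; ring))
  filter_upwards [self_mem_nhdsWithin] with m hm
  rw [nuSIP_zero_eq_exp hm hρ.le, neg_sub]

theorem tendsto_nuSIP_zero {ρ : ℝ} (hρ : 0 < ρ) :
    Tendsto (fun m => nuSIP m ρ 0) (𝓝[>] 0) (𝓝 1) := by
  have h0 : Tendsto (fun m : ℝ => -(m / 2) * log m) (𝓝[>] 0) (𝓝 0) := by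
    simpa using tendsto_half_mul_log_nhdsGT_zero.neg
  simpa using ((isEquivalent_one_sub_nuSIP_zero hρ).tendsto_nhds_iff.2 h0).const_sub 1

/-- **Degenerate conditional distribution of a non-empty site as `m → 0`**:
(i) `1 − ν^{(m)}_ρ(0) = −(m/2)(log m)(1+o(1))`; (ii) for every fixed `n ≥ 1`,
`|log m| ν^{(m)}_ρ(n)/(1 − ν^{(m)}_ρ(0)) → 1/n`. -/
theorem sip_conditional_degenerate
    (ρ : ℝ) (hρ : 0 < ρ) :
    Tendsto (fun m : ℝ => (1 - nuSIP m ρ 0) / (-(m / 2) * Real.log m))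
      (𝓝[>] 0) (𝓝 1) ∧
    (∀ n : ℕ, 1 ≤ n →
      Tendsto (fun m : ℝ => |Real.log m| * (nuSIP m ρ n / (1 - nuSIP m ρ 0)))
        (𝓝[>] 0) (𝓝 (1 / n))) := by
  have hequiv := isEquivalent_one_sub_nuSIP_zero hρ
  have hunit : Set.Ioo (0 : ℝ) 1 ∈ 𝓝[>] 0 := Ioo_mem_nhdsGT one_pos
  have hne : ∀ᶠ m in 𝓝[>] (0 : ℝ), -(m / 2) * log m ≠ 0 := by
    filter_upwards [hunit] with m ⟨hm0, hm1⟩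
    exact mul_ne_zero (by linarith) (log_neg hm0 hm1).ne
  refine ⟨(isEquivalent_iff_tendsto_one hne).1 hequiv, fun n hn => ?_⟩
  have hden : (fun m => |log m| * (nuSIP m ρ n / (1 - nuSIP m ρ 0))) ~[𝓝[>] 0]
      fun m => |log m| * (nuSIP m ρ n / (-(m / 2) * log m)) :=
    IsEquivalent.refl.mul (IsEquivalent.refl.div hequiv)
  have hlim := (tendsto_nuSIP_zero hρ).mul
    ((tendsto_pow_mul_Gamma_div_factorial_mul_Gamma hρ.ne' hn).mono_left nhdsWithin_le_nhds)
  rw [one_mul] at hlim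
  rw [hden.tendsto_nhds_iff]
  refine hlim.congr' ?_
  filter_upwards [hunit] with m ⟨hm0, hm1⟩
  have hlog : log m < 0 := log_neg hm0 hm1
  rw [nuSIP_eq_half_mul hm0 ρ n, abs_of_neg hlog]
  field_simp [hlog.ne]
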